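/- Let E be a finite-dimensional real inner product space, ν ∈ (0,1), k ∈ ℕ, and let T : E → E be ν-averaged, i.e. T = (1−ν)·id + ν·G for some nonexpansive (1-Lipschitz) map G : E → E, with at least one fixed point. Let Z ⊆ E be a nonempty compact set containing all fixed points of T, and define L(z) = ‖T(T^[k] z) − T^[k] z‖. Then there exist z̄, w̄ ∈ Z such that (z̄, w̄) maximizes (z, w) ↦ |L(z) − L(w)| over Z × Z and |L(z̄) − L(w̄)| ≤ (1/√((k+1) ν (1−ν))) ‖z̄ − w̄‖. -/

import Mathlib

/-!
Fix a fixed point `p` of `T`; it is also fixed by `G`. Expanding the square of a convex combination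
gives the Fejér-type descent `ν ‖T x - p‖² + (1 - ν) ‖x - T x‖² ≤ ν ‖x - p‖²`. Since `T` is
nonexpansive the residual `‖x - T x‖` does not increase along the orbit, so telescoping `k + 1`
descent steps bounds `(k + 1) (1 - ν) L(z)²` by `ν ‖z - p‖²`, whence `L(z) ≤ ‖z - p‖ / √((k+1)ν(1-ν))`.
As `L ≥ 0` and `L(p) = 0`, the pair (maximizer of `L` on `Z`, `p`) maximizes `|L z - L w|`.
-/

open Function

lemma norm_one_sub_smul_add_smul_sq {E : Type*} [NormedAddCommGroup E] [InnerProductSpace ℝ E]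
    (t : ℝ) (a b : E) :
    ‖(1 - t) • a + t • b‖ ^ 2
      = (1 - t) * ‖a‖ ^ 2 + t * ‖b‖ ^ 2 - t * (1 - t) * ‖a - b‖ ^ 2 := by
  rw [norm_add_sq_real, norm_sub_sq_real]
  simp only [norm_smul, real_inner_smul_left, real_inner_smul_right, mul_pow, Real.norm_eq_abs,
    sq_abs]
  ring

lemma iterate_succ_add_mul_le_of_descent {α : Type*} (T : α → α) (V R : α → ℝ)
    (hdesc : ∀ x, V (T x) + R x ≤ V x) (hmono : ∀ x, R (T x) ≤ R x) (x : α) (n : ℕ) :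
    V (T^[n + 1] x) + (n + 1) * R (T^[n] x) ≤ V x := by
  induction n with
  | zero => simpa using hdesc x
  | succ n ih =>
    have hdesc' := hdesc (T^[n + 1] x)
    have hmono' : R (T^[n + 1] x) ≤ R (T^[n] x) := by
      rw [iterate_succ_apply']; exact hmono _
    rw [iterate_succ_apply' T (n + 1)]
    push_cast
    linarith [mul_le_mul_of_nonneg_left hmono' n.cast_add_one_pos.le]

lemma abs_sub_le_of_isMaxOn_of_nonneg {α : Type*} {f : α → ℝ} {Z : Set α} {a b : α}
    (hf : ∀ z ∈ Z, 0 ≤ f z) (ha : IsMaxOn f Z a) (hb : f b = 0) :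
    ∀ z ∈ Z, ∀ w ∈ Z, |f z - f w| ≤ |f a - f b| := by
  intro z hz w hw
  have hz' : f z ≤ f a := ha hz
  have hw' : f w ≤ f a := ha hw
  rw [hb, sub_zero, abs_le]
  constructor <;> linarith [hf z hz, hf w hw, le_abs_self (f a)]

section Averaged

variable {E : Type*} [NormedAddCommGroup E] [InnerProductSpace ℝ E] {ν : ℝ} {T G : E → E}

lemma lipschitzWith_one_of_averaged (hν0 : 0 ≤ ν) (hν1 : ν ≤ 1) (hG : LipschitzWith 1 G)
    (hTG : ∀ x, T x = (1 - ν) • x + ν • G x) : LipschitzWith 1 T := by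
  refine LipschitzWith.of_dist_le_mul fun x y => ?_
  have hGxy : ‖G x - G y‖ ≤ ‖x - y‖ := by simpa [dist_eq_norm] using hG.dist_le_mul x y
  have hsplit : T x - T y = (1 - ν) • (x - y) + ν • (G x - G y) := by
    rw [hTG, hTG]; module
  rw [NNReal.coe_one, one_mul, dist_eq_norm, dist_eq_norm, hsplit]
  calc ‖(1 - ν) • (x - y) + ν • (G x - G y)‖
      ≤ (1 - ν) * ‖x - y‖ + ν * ‖G x - G y‖ := by
        refine (norm_add_le _ _).trans_eq ?_
        rw [norm_smul, norm_smul, Real.norm_of_nonneg (by linarith), Real.norm_of_nonneg hν0]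
    _ ≤ (1 - ν) * ‖x - y‖ + ν * ‖x - y‖ := by gcongr
    _ = ‖x - y‖ := by ring

lemma apply_eq_of_averaged_fixed (hν0 : ν ≠ 0) (hTG : ∀ x, T x = (1 - ν) • x + ν • G x)
    {p : E} (hp : T p = p) : G p = p := by
  have h : ν • (G p - p) = 0 := by
    have := hTG p
    rw [hp] at this
    rw [smul_sub, sub_eq_zero]
    calc ν • G p = (1 - ν) • p + ν • G p - (1 - ν) • p := by abel
      _ = ν • p := by rw [← this]; module
  exact sub_eq_zero.mp ((smul_eq_zero.mp h).resolve_left hν0)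

lemma averaged_descent (hν0 : 0 < ν) (hG : LipschitzWith 1 G)
    (hTG : ∀ x, T x = (1 - ν) • x + ν • G x) {p : E} (hp : T p = p) (x : E) :
    ν * ‖T x - p‖ ^ 2 + (1 - ν) * ‖x - T x‖ ^ 2 ≤ ν * ‖x - p‖ ^ 2 := by
  have hGp := apply_eq_of_averaged_fixed hν0.ne' hTG hp
  have hGx : ‖G x - p‖ ≤ ‖x - p‖ := by
    simpa [dist_eq_norm, hGp] using hG.dist_le_mul x p
  have hTx : ‖T x - p‖ ^ 2
      = (1 - ν) * ‖x - p‖ ^ 2 + ν * ‖G x - p‖ ^ 2 - ν * (1 - ν) * ‖x - G x‖ ^ 2 := by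
    rw [← sub_sub_sub_cancel_right x (G x) p, ← norm_one_sub_smul_add_smul_sq, hTG]
    congr 2; module
  have hres : ‖x - T x‖ ^ 2 = ν ^ 2 * ‖x - G x‖ ^ 2 := by
    rw [hTG, show x - ((1 - ν) • x + ν • G x) = ν • (x - G x) by module, norm_smul,
      Real.norm_eq_abs, mul_pow, sq_abs]
  have hGx2 : ‖G x - p‖ ^ 2 ≤ ‖x - p‖ ^ 2 := by gcongr
  rw [hTx, hres]
  nlinarith [mul_le_mul_of_nonneg_left hGx2 hν0.le]

-- The descent gives the sharper factor `√((k+1) (1-ν) / ν)`; the stated one follows from `ν² ≤ 1`.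
lemma norm_residual_iterate_le (hν0 : 0 < ν) (hν1 : ν < 1) (hG : LipschitzWith 1 G)
    (hTG : ∀ x, T x = (1 - ν) • x + ν • G x) {p : E} (hp : T p = p) (k : ℕ) (z : E) :
    ‖T (T^[k] z) - T^[k] z‖ ≤ 1 / Real.sqrt ((k + 1 : ℝ) * ν * (1 - ν)) * ‖z - p‖ := by
  have hT := lipschitzWith_one_of_averaged hν0.le hν1.le hG hTG
  have hsum := iterate_succ_add_mul_le_of_descent T (fun x => ν * ‖x - p‖ ^ 2)
    (fun x => (1 - ν) * ‖x - T x‖ ^ 2) (averaged_descent hν0 hG hTG hp)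
    (fun x => by
      have : ‖T x - T (T x)‖ ≤ ‖x - T x‖ := by
        simpa [dist_eq_norm] using hT.dist_le_mul x (T x)
      gcongr) z k
  have hc : 0 < (k + 1 : ℝ) * ν * (1 - ν) := by
    have : 0 < 1 - ν := by linarith
    positivity
  rw [one_div_mul_eq_div, le_div_iff₀ (Real.sqrt_pos.mpr hc), norm_sub_rev,
    ← pow_le_pow_iff_left₀ (by positivity) (norm_nonneg _) two_ne_zero, mul_pow,
    Real.sq_sqrt hc.le]
  have hν2 : ν ^ 2 ≤ 1 := by nlinarith
  nlinarith [norm_nonneg (T^[k + 1] z - p), mul_le_mul_of_nonneg_left hν2 (sq_nonneg ‖z - p‖)]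

end Averaged

theorem stmt_7_general {E : Type*} [NormedAddCommGroup E] [InnerProductSpace ℝ E]
    (ν : ℝ) (hν0 : 0 < ν) (hν1 : ν < 1) (k : ℕ) (T G : E → E)
    (hG : LipschitzWith 1 G) (hTG : ∀ x, T x = (1 - ν) • x + ν • G x)
    (hfix : ∃ z, T z = z)
    (Z : Set E) (hZne : Z.Nonempty) (hZc : IsCompact Z) (hZfix : ∀ z, T z = z → z ∈ Z)
    (L : E → ℝ) (hL : ∀ z, L z = ‖T (T^[k] z) - T^[k] z‖) :
    ∃ zbar ∈ Z, ∃ wbar ∈ Z,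
      (∀ z ∈ Z, ∀ w ∈ Z, |L z - L w| ≤ |L zbar - L wbar|) ∧
      |L zbar - L wbar| ≤
        (1 / Real.sqrt ((k + 1 : ℝ) * ν * (1 - ν))) * ‖zbar - wbar‖ := by
  obtain ⟨p, hp⟩ := hfix
  have hTc := (lipschitzWith_one_of_averaged hν0.le hν1.le hG hTG).continuous
  have hLc : Continuous L := by
    rw [funext hL]; exact ((hTc.comp (hTc.iterate k)).sub (hTc.iterate k)).norm
  obtain ⟨zbar, hzbar, hmax⟩ := hZc.exists_isMaxOn hZne hLc.continuousOn
  have hLp : L p = 0 := by rw [hL, iterate_fixed hp, hp, sub_self, norm_zero]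
  refine ⟨zbar, hzbar, p, hZfix p hp,
    abs_sub_le_of_isMaxOn_of_nonneg (fun z _ => (hL z).symm ▸ norm_nonneg _) hmax hLp, ?_⟩
  rw [hLp, sub_zero, hL, abs_norm]
  exact norm_residual_iterate_le hν0 hν1 hG hTG hp k zbar

/-- non-strongly-convex case: there is a maximizing pair of the loss gap on
`Z × Z` at which a Lipschitz-like inequality holds. -/
theorem stmt_7 {E : Type*} [NormedAddCommGroup E] [InnerProductSpace ℝ E]
    [FiniteDimensional ℝ E]
    (ν : ℝ) (hν0 : 0 < ν) (hν1 : ν < 1) (k : ℕ) (T G : E → E)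
    (hG : LipschitzWith 1 G) (hTG : ∀ x, T x = (1 - ν) • x + ν • G x)
    (hfix : ∃ z, T z = z)
    (Z : Set E) (hZne : Z.Nonempty) (hZc : IsCompact Z) (hZfix : ∀ z, T z = z → z ∈ Z)
    (L : E → ℝ) (hL : ∀ z, L z = ‖T (T^[k] z) - T^[k] z‖) :
    ∃ zbar ∈ Z, ∃ wbar ∈ Z,
      (∀ z ∈ Z, ∀ w ∈ Z, |L z - L w| ≤ |L zbar - L wbar|) ∧
      |L zbar - L wbar| ≤
        (1 / Real.sqrt ((k + 1 : ℝ) * ν * (1 - ν))) * ‖zbar - wbar‖ :=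
  stmt_7_general ν hν0 hν1 k T G hG hTG hfix Z hZne hZc hZfix L hL
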